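/- Assume condition (∗). If every ω*-sequence in I is trivial, then the disjoint union X = ⋃_{i∈I} X_i is reversible. -/

import Mathlib

universe u v w

section Defs

variable {α : Type*} {β : Type*}

/-- `f` is a homomorphism from `⟨α, r⟩` to `⟨β, s⟩`. -/
def IsHom (r : α → α → Prop) (s : β → β → Prop) (f : α → β) : Prop :=
  ∀ x y, r x y → s (f x) (f y)

/-- A condensation is a bijective homomorphism. -/
def IsCond (r : α → α → Prop) (s : β → β → Prop) (f : α → β) : Prop :=
  Function.Bijective f ∧ IsHom r s f

/-- A monomorphism is an injective homomorphism. -/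
def IsMono (r : α → α → Prop) (s : β → β → Prop) (f : α → β) : Prop :=
  Function.Injective f ∧ IsHom r s f

/-- An isomorphism of binary structures. -/
def IsIso (r : α → α → Prop) (s : β → β → Prop) (f : α → β) : Prop :=
  Function.Bijective f ∧ ∀ x y, r x y ↔ s (f x) (f y)

/-- A binary structure is reversible iff every self-condensation is an automorphism. -/
def Reversible (r : α → α → Prop) : Prop :=
  ∀ f : α → α, IsCond r r f → IsIso r r f

/-- A binary structure is connected iff it has exactly one component: it is nonempty and
the least equivalence relation containing `r` relates any two points. -/
def Connected (r : α → α → Prop) : Prop :=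
  Nonempty α ∧ ∀ x y, Relation.EqvGen r x y

/-- The relation of the disjoint union of the structures `⟨X i, R i⟩`. -/
def unionRel {I : Type*} {X : I → Type*} (R : ∀ i, X i → X i → Prop) :
    (Σ i, X i) → (Σ i, X i) → Prop :=
  fun a b => ∃ h : a.1 = b.1, R b.1 (h ▸ a.2) b.2

end Defs

/-!
A condensation `f` of the union maps each connected `X i` into a single `X (σ i)` by a
monomorphism `φ i`, and `σ` is onto. If `i` is not periodic under `σ`, choosing preimages
backwards from `i` gives an ω*-sequence `σ i, i, i₋₁, …`; its triviality makes `φ i` an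
isomorphism. In particular `φ i` is onto, so no other component is mapped into `X (σ i)`, and
`σ` is injective. If `i` is periodic, composing the `φ`'s around its cycle gives a
self-condensation of `X i`, an automorphism by reversibility, so `φ i` reflects the relation too.
-/

open Function

section Morphisms

variable {α β γ : Type*} {r : α → α → Prop} {s : β → β → Prop} {t : γ → γ → Prop}
  {f : α → β} {g : β → γ}

theorem IsHom.comp (hg : IsHom s t g) (hf : IsHom r s f) : IsHom r t (g ∘ f) :=
  fun _ _ h => hg _ _ (hf _ _ h)

theorem IsMono.comp (hg : IsMono s t g) (hf : IsMono r s f) : IsMono r t (g ∘ f) :=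
  ⟨hg.1.comp hf.1, hg.2.comp hf.2⟩

theorem IsCond.comp (hg : IsCond s t g) (hf : IsCond r s f) : IsCond r t (g ∘ f) :=
  ⟨hg.1.comp hf.1, hg.2.comp hf.2⟩

theorem Reversible.isIso_of_eq {X : α → Type*} {R : ∀ i, X i → X i → Prop}
    {i j : α} (hrev : Reversible (R i)) (hij : i = j) {F : X i → X j}
    (hF : IsCond (R i) (R j) F) : IsIso (R i) (R j) F := by
  subst hij
  exact hrev F hF

end Morphisms

section BackwardOrbit

variable {I : Type*} {σ : I → I} {G : ℕ → I}

theorem iterate_apply_of_backward (hG : ∀ k, σ (G (k + 1)) = G k) (k l : ℕ) :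
    σ^[k] (G (k + l)) = G l := by
  induction k with
  | zero => simp
  | succ k ih => rw [iterate_succ_apply, add_right_comm, hG, ih]

theorem injective_of_backward (hG : ∀ k, σ (G (k + 1)) = G k) (h1 : G 1 ∉ periodicPts σ) :
    Injective G := by
  -- `G m = G (m + d + 1)` gives `G 0 = G (d + 1)`, so `G 1` has period `d + 1`.
  refine Injective.of_lt_imp_ne fun m n hmn heq => h1 ?_
  obtain ⟨d, rfl⟩ := Nat.exists_eq_add_of_lt hmn
  have h0 : G 0 = G (d + 1) := by
    rw [← iterate_apply_of_backward hG m 0, ← iterate_apply_of_backward hG m (d + 1), add_zero,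
      heq, add_assoc]
  refine mk_mem_periodicPts d.succ_pos ?_
  change σ^[d] (σ (G 1)) = G 1
  rw [hG 0, h0, iterate_apply_of_backward hG d 1]

theorem exists_backward_of_notMem_periodicPts (hσ : Surjective σ) {i : I}
    (hi : i ∉ periodicPts σ) :
    ∃ G : ℕ → I, Injective G ∧ (∀ k, σ (G (k + 1)) = G k) ∧ G 1 = i := by
  have hστ : ∀ j, σ (surjInv hσ j) = j := rightInverse_surjInv hσ
  -- `G 0 = σ i` and `G (k + 1) = (surjInv hσ)^[k] i`
  let G k := σ ((surjInv hσ)^[k] i)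
  have hG : ∀ k, σ (G (k + 1)) = G k := fun k => by simp only [G, iterate_succ_apply', hστ]
  have hG1 : G 1 = i := hστ i
  exact ⟨G, injective_of_backward hG (hG1 ▸ hi), hG, hG1⟩

end BackwardOrbit

section UnionMorphisms

variable {I : Type*} {X : I → Type*} {R : ∀ i, X i → X i → Prop}

theorem unionRel_mk_mk {i : I} {x y : X i} : unionRel R ⟨i, x⟩ ⟨i, y⟩ ↔ R i x y :=
  ⟨fun ⟨_, h⟩ => h, fun h => ⟨rfl, h⟩⟩

theorem IsHom.fst_eq_of_eqvGen {f : (Σ i, X i) → Σ i, X i}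
    (hf : IsHom (unionRel R) (unionRel R) f) {i : I} {x y : X i}
    (h : Relation.EqvGen (R i) x y) : (f ⟨i, x⟩).1 = (f ⟨i, y⟩).1 := by
  induction h with
  | rel u v huv => exact (hf _ _ (unionRel_mk_mk.2 huv)).1
  | refl => rfl
  | symm _ _ _ ih => exact ih.symm
  | trans _ _ _ _ _ ih₁ ih₂ => exact ih₁.trans ih₂

theorem IsHom.exists_eq_sigma_map {f : (Σ i, X i) → Σ i, X i} (hconn : ∀ i, Connected (R i))
    (hf : IsHom (unionRel R) (unionRel R) f) :
    ∃ (σ : I → I) (φ : ∀ i, X i → X (σ i)), f = Sigma.map σ φ := by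
  let σ i := (f ⟨i, (hconn i).1.some⟩).1
  have hσ : ∀ i x, (f ⟨i, x⟩).1 = σ i := fun i _ => hf.fst_eq_of_eqvGen ((hconn i).2 _ _)
  exact ⟨σ, fun i x => hσ i x ▸ (f ⟨i, x⟩).2,
    funext fun ⟨i, x⟩ => Sigma.ext (hσ i x) (eqRec_heq _ _).symm⟩

variable {σ : I → I} {φ : ∀ i, X i → X (σ i)}

theorem IsHom.of_sigma_map (hf : IsHom (unionRel R) (unionRel R) (Sigma.map σ φ)) (i : I) :
    IsHom (R i) (R (σ i)) (φ i) :=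
  fun x y h => unionRel_mk_mk.1 (hf ⟨i, x⟩ ⟨i, y⟩ (unionRel_mk_mk.2 h))

theorem Function.Surjective.of_sigma_map_left (hf : Surjective (Sigma.map σ φ))
    (hne : ∀ i, Nonempty (X i)) : Surjective σ := fun j =>
  let ⟨p, hp⟩ := hf ⟨j, (hne j).some⟩
  ⟨p.1, congrArg Sigma.fst hp⟩

theorem Function.Surjective.of_sigma_map (hf : Surjective (Sigma.map σ φ)) (hσ : Injective σ)
    (i : I) : Surjective (φ i) := fun y => by
  obtain ⟨⟨j, x⟩, hx⟩ := hf ⟨σ i, y⟩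
  obtain rfl : j = i := hσ (congrArg Sigma.fst hx)
  exact ⟨x, sigma_mk_injective hx⟩

theorem exists_sigma_map_eq_of_surjective {i : I} (hφ : Surjective (φ i)) {p : Σ i, X i}
    (hp : p.1 = σ i) : ∃ x, Sigma.map σ φ ⟨i, x⟩ = p := by
  obtain ⟨j, y⟩ := p
  obtain rfl : j = σ i := hp
  obtain ⟨x, rfl⟩ := hφ y
  exact ⟨x, rfl⟩

theorem injective_of_surjective_of_notMem_periodicPts (hf : Injective (Sigma.map σ φ))
    (hne : ∀ i, Nonempty (X i)) (hφ : ∀ i ∉ periodicPts σ, Surjective (φ i)) :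
    Injective σ := by
  have eq_of_notMem : ∀ a b, σ a = σ b → a ∉ periodicPts σ → a = b := fun a b hab ha => by
    obtain ⟨x, hx⟩ := exists_sigma_map_eq_of_surjective (hφ a ha)
      (p := Sigma.map σ φ ⟨b, (hne b).some⟩) hab.symm
    exact congrArg Sigma.fst (hf hx)
  intro a b hab
  by_cases ha : a ∈ periodicPts σ
  · by_cases hb : b ∈ periodicPts σ
    · exact (bijOn_periodicPts σ).injOn ha hb hab
    · exact (eq_of_notMem b a hab.symm hb).symm
  · exact eq_of_notMem a b hab ha

theorem isIso_sigma_map (hf : IsCond (unionRel R) (unionRel R) (Sigma.map σ φ))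
    (hσ : Injective σ) (hφ : ∀ i x y, R (σ i) (φ i x) (φ i y) → R i x y) :
    IsIso (unionRel R) (unionRel R) (Sigma.map σ φ) := by
  refine ⟨hf.1, fun ⟨i, x⟩ ⟨j, y⟩ => ⟨hf.2 _ _, fun ⟨hij, h⟩ => ?_⟩⟩
  obtain rfl : i = j := hσ hij
  exact unionRel_mk_mk.2 (hφ i x y h)

end UnionMorphisms

section OmegaStar

variable {I : Type*} {X : I → Type*} {R : ∀ i, X i → X i → Prop}

variable (R) in
def Embeds (i j : I) : Prop :=
  ∃ F : X i → X j, IsMono (R i) (R j) F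

theorem Embeds.trans {i j k : I} (hij : Embeds R i j) (hjk : Embeds R j k) : Embeds R i k :=
  let ⟨F, hF⟩ := hij
  let ⟨F', hF'⟩ := hjk
  ⟨F' ∘ F, hF'.comp hF⟩

theorem embeds_of_lt {G : ℕ → I} (hG : ∀ k, Embeds R (G (k + 1)) (G k)) {k l : ℕ}
    (hkl : k < l) : Embeds R (G l) (G k) := by
  induction l, hkl using Nat.le_induction with
  | base => exact hG k
  | succ l _ ih => exact (hG l).trans ih

variable (R) in
def IsOmegaStarSeq (g : ℕ → I) : Prop :=
  Injective g ∧ ∀ k l, k < l → Embeds R (g l) (g k)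

variable (R) in
def IsTrivialOmegaStarSeq (g : ℕ → I) : Prop :=
  ∀ F : X (g 1) → X (g 0), IsMono (R (g 1)) (R (g 0)) F → IsIso (R (g 1)) (R (g 0)) F

variable {σ : I → I} {φ : ∀ i, X i → X (σ i)}

theorem isIso_of_notMem_periodicPts
    (htriv : ∀ g, IsOmegaStarSeq R g → IsTrivialOmegaStarSeq R g) (hσ : Surjective σ)
    (hφ : ∀ i, IsMono (R i) (R (σ i)) (φ i)) {i : I} (hi : i ∉ periodicPts σ) :
    IsIso (R i) (R (σ i)) (φ i) := by
  obtain ⟨G, hinj, hG, rfl⟩ := exists_backward_of_notMem_periodicPts hσ hi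
  have hemb : ∀ k, Embeds R (G (k + 1)) (G k) := fun k => hG k ▸ ⟨_, hφ _⟩
  have htrivG := htriv G ⟨hinj, fun _ _ => embeds_of_lt hemb⟩
  rw [IsTrivialOmegaStarSeq, ← hG 0] at htrivG
  exact htrivG _ (hφ _)

end OmegaStar

section Cycles

variable {I : Type*} {X : I → Type*} {R : ∀ i, X i → X i → Prop} {σ : I → I}

def iterateFiber (φ : ∀ i, X i → X (σ i)) : ∀ n i, X i → X (σ^[n] i)
  | 0, _ => id
  | n + 1, i => iterateFiber φ n (σ i) ∘ φ i

variable {φ : ∀ i, X i → X (σ i)}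

theorem isCond_iterateFiber (hφ : ∀ i, IsCond (R i) (R (σ i)) (φ i)) (n : ℕ) (i : I) :
    IsCond (R i) (R (σ^[n] i)) (iterateFiber φ n i) := by
  induction n generalizing i with
  | zero => exact ⟨bijective_id, fun _ _ h => h⟩
  | succ n ih => exact (ih (σ i)).comp (hφ i)

theorem rel_of_rel_of_mem_periodicPts (hrev : ∀ i, Reversible (R i))
    (hφ : ∀ i, IsCond (R i) (R (σ i)) (φ i)) {i : I} (hi : i ∈ periodicPts σ) {x y : X i}
    (h : R (σ i) (φ i x) (φ i y)) : R i x y := by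
  obtain ⟨n, hn, hper⟩ := mem_periodicPts.1 hi
  obtain ⟨m, rfl⟩ : ∃ m, n = m + 1 := ⟨n - 1, by omega⟩
  have hiso := (hrev i).isIso_of_eq hper.symm (isCond_iterateFiber hφ (m + 1) i)
  exact (hiso.2 x y).2 ((isCond_iterateFiber hφ m (σ i)).2 _ _ h)

end Cycles

/-- **Theorem (Statement 7).** Under condition (∗) — `⟨X i, R i⟩`, `i ∈ I`, pairwise disjoint
(realized by a sigma type), connected and reversible binary structures — if every ω*-sequence
in `I` (an injection `g : ω → I` such that `X (g l)` maps monomorphically into `X (g k)` for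
all `k < l`) is trivial (every monomorphism from `X (g 1)` to `X (g 0)` is an isomorphism),
then the disjoint union `⋃_{i∈I} X i` is reversible. -/
theorem stmt7 {I : Type u} {X : I → Type v} (R : ∀ i, X i → X i → Prop)
    (hconn : ∀ i, Connected (R i)) (hrev : ∀ i, Reversible (R i))
    (htriv : ∀ g : ℕ → I,
      Function.Injective g →
      (∀ k l : ℕ, k < l → ∃ F : X (g l) → X (g k), IsMono (R (g l)) (R (g k)) F) →
      ∀ F : X (g 1) → X (g 0), IsMono (R (g 1)) (R (g 0)) F → IsIso (R (g 1)) (R (g 0)) F) :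
    Reversible (unionRel R) := by
  intro f hf
  obtain ⟨σ, φ, rfl⟩ := hf.2.exists_eq_sigma_map hconn
  have hne : ∀ i, Nonempty (X i) := fun i => (hconn i).1
  have hφmono : ∀ i, IsMono (R i) (R (σ i)) (φ i) := fun i =>
    ⟨hf.1.1.of_sigma_map i, hf.2.of_sigma_map i⟩
  have hφiso : ∀ i ∉ periodicPts σ, IsIso (R i) (R (σ i)) (φ i) := fun i =>
    isIso_of_notMem_periodicPts (fun g hg => htriv g hg.1 hg.2) (hf.1.2.of_sigma_map_left hne)
      hφmono
  have hσ : Injective σ :=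
    injective_of_surjective_of_notMem_periodicPts hf.1.1 hne fun i hi => (hφiso i hi).1.2
  have hφcond : ∀ i, IsCond (R i) (R (σ i)) (φ i) := fun i =>
    ⟨⟨(hφmono i).1, hf.1.2.of_sigma_map hσ i⟩, (hφmono i).2⟩
  refine isIso_sigma_map hf hσ fun i x y h => ?_
  by_cases hi : i ∈ periodicPts σ
  · exact rel_of_rel_of_mem_periodicPts hrev hφcond hi h
  · exact ((hφiso i hi).2 x y).2 h
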